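/- arXiv:2002.11378 — 4 statements merged into one kernel-verified Lean document; each statement's English description precedes it below -/
import Mathlib

section
/- A read/write register object over a value domain containing at least two distinct values is doubly-perturbing: the write operation write_p(v₁) by process p is perturbing with respect to read_q after the empty history, and the history write_p(v₁) ∘ read_q extends (p-freely, by write_q(v₀)) to a history H₂ after which write_p(v₁) is again perturbing with respect to read_q. -/
/-- Operations of a read/write register over value domain `V`. -/
inductive RegOp (V : Type) : Type
  | write (v : V)
  | read

/-- State transition of a register operation. -/
def regStep {V : Type} : RegOp V → V → V
  | .write v, _ => v
  | .read, s => s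

/-- Response of a register operation (`none` is the ack of a write). -/
def regResp {V : Type} : RegOp V → V → Option V
  | .write _, _ => none
  | .read, s => some s

/-- State reached by applying a sequential history from initial value `init`. -/
def regRun {V : Type} (init : V) (H : List (RegOp V)) : V :=
  H.foldl (fun s op => regStep op s) init

/-- `opp` is perturbing with respect to `opq` after history `H`. -/
def regPerturbing {V : Type} (init : V) (opp opq : RegOp V) (H : List (RegOp V)) : Prop :=
  regResp opq (regRun init (H ++ [opp])) ≠ regResp opq (regRun init H)

section Register

variable {V : Type} (init : V)

theorem regRun_append_singleton (H : List (RegOp V)) (op : RegOp V) :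
    regRun init (H ++ [op]) = regStep op (regRun init H) :=
  List.foldl_concat _ _ _ _

theorem regRun_append_write (H : List (RegOp V)) (v : V) :
    regRun init (H ++ [RegOp.write v]) = v :=
  regRun_append_singleton init H (RegOp.write v)

theorem regPerturbing_write_read_iff (H : List (RegOp V)) (v : V) :
    regPerturbing init (RegOp.write v) RegOp.read H ↔ v ≠ regRun init H := by
  rw [regPerturbing, regRun_append_write]
  exact not_congr Option.some_inj

end Register

/-- A read/write register with two distinct values is doubly-perturbing,
witnessed by `write v₁`: it is perturbing w.r.t. `read` after the empty
history, and again after `write_p(v₁) ∘ read_q ∘ write_q(v₀)`. -/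
theorem stmt2 {V : Type} (v0 v1 : V) (h : v0 ≠ v1) :
    regPerturbing v0 (RegOp.write v1) RegOp.read [] ∧
    regPerturbing v0 (RegOp.write v1) RegOp.read
      [RegOp.write v1, RegOp.read, RegOp.write v0] := by
  have hH₂ : regRun v0 [RegOp.write v1, RegOp.read, RegOp.write v0] = v0 :=
    regRun_append_write v0 [RegOp.write v1, RegOp.read] v0
  rw [regPerturbing_write_read_iff, regPerturbing_write_read_iff, hH₂]
  exact ⟨h.symm, h.symm⟩
end

section
/- A compare-and-swap object over a domain with two distinct values v₀ ≠ v₁, initialized to v₀, is doubly-perturbing, witnessed by CAS_p(v₀,v₁): it is perturbing with respect to CAS_q(v₀,v₁) after the empty history, and after extending CAS_p(v₀,v₁) ∘ CAS_q(v₀,v₁) by CAS_q(v₁,v₀), a second CAS_p(v₀,v₁) is again perturbing with respect to CAS_q(v₀,v₁). -/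
/-! `CAS(a, b)` perturbs any later `CAS(a, c)` exactly when it finds the state `a` and actually
changes it. The history `CAS(v₀,v₁) ∘ CAS(v₀,v₁) ∘ CAS(v₁,v₀)` takes the state from `v₀` to `v₁`
and back to `v₀`, so the perturbing situation of the empty history recurs. -/

/-- A compare-and-swap operation with arguments `old` and `new`. -/
inductive CASOp (V : Type) : Type
  | cas (old new : V)

def casStep {V : Type} [DecidableEq V] : CASOp V → V → V
  | .cas old new, s => if s = old then new else s

def casResp {V : Type} [DecidableEq V] : CASOp V → V → Bool
  | .cas old _, s => decide (s = old)

def casRun {V : Type} [DecidableEq V] (init : V) (H : List (CASOp V)) : V :=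
  H.foldl (fun s op => casStep op s) init

def casPerturbing {V : Type} [DecidableEq V] (init : V) (opp opq : CASOp V)
    (H : List (CASOp V)) : Prop :=
  casResp opq (casRun init (H ++ [opp])) ≠ casResp opq (casRun init H)

theorem casRun_append_singleton {V : Type} [DecidableEq V] (init : V) (H : List (CASOp V))
    (op : CASOp V) : casRun init (H ++ [op]) = casStep op (casRun init H) := by
  simp only [casRun, List.foldl_append, List.foldl_cons, List.foldl_nil]

theorem casPerturbing_cas_cas_iff {V : Type} [DecidableEq V] (init a b c : V)
    (H : List (CASOp V)) :
    casPerturbing init (CASOp.cas a b) (CASOp.cas a c) H ↔ casRun init H = a ∧ b ≠ a := by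
  rw [casPerturbing, casRun_append_singleton]
  by_cases hs : casRun init H = a <;> simp [casStep, casResp, hs]

/-- A CAS object with two distinct values, initialized to `v₀`, is
doubly-perturbing, witnessed by `CAS_p(v₀,v₁)`: it is perturbing w.r.t.
`CAS_q(v₀,v₁)` after the empty history, and again after the history
`CAS_p(v₀,v₁) ∘ CAS_q(v₀,v₁) ∘ CAS_q(v₁,v₀)`. -/
theorem stmt4 {V : Type} [DecidableEq V] (v0 v1 : V) (h : v0 ≠ v1) :
    casPerturbing v0 (CASOp.cas v0 v1) (CASOp.cas v0 v1) [] ∧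
    casPerturbing v0 (CASOp.cas v0 v1) (CASOp.cas v0 v1)
      [CASOp.cas v0 v1, CASOp.cas v0 v1, CASOp.cas v1 v0] := by
  have returns_to_v0 : casRun v0 [CASOp.cas v0 v1, CASOp.cas v0 v1, CASOp.cas v1 v0] = v0 := by
    simp [casRun, casStep]
  exact ⟨(casPerturbing_cas_cas_iff _ _ _ _ _).2 ⟨rfl, h.symm⟩,
    (casPerturbing_cas_cas_iff _ _ _ _ _).2 ⟨returns_to_v0, h.symm⟩⟩
end

section
/- A FIFO queue object over a domain with two distinct values v₀ ≠ v₁, initially empty, is doubly-perturbing, witnessed by the dequeue operation: after the history Enq_p(v₀) ∘ Enq_p(v₁), Deq_p is perturbing with respect to Deq_q; and extending further by Enq_q(v₀) ∘ Enq_q(v₁) yields a history H₂ after which Deq_p is again perturbing with respect to Deq_q. -/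
/-- Operations of a FIFO queue over value domain `V`. -/
inductive QOp (V : Type) : Type
  | enq (v : V)
  | deq

def qStep {V : Type} : QOp V → List V → List V
  | .enq v, s => s ++ [v]
  | .deq, s => s.tail

/-- `enq` returns an ack (`none`); `deq` returns the first element, or the
special empty response `some none` when the queue is empty. -/
def qResp {V : Type} : QOp V → List V → Option (Option V)
  | .enq _, _ => none
  | .deq, s => some s.head?

def qRun {V : Type} (H : List (QOp V)) : List V :=
  H.foldl (fun s op => qStep op s) []

def qPerturbing {V : Type} (opp opq : QOp V) (H : List (QOp V)) : Prop :=
  qResp opq (qRun (H ++ [opp])) ≠ qResp opq (qRun H)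

theorem qRun_append_singleton {V : Type} (H : List (QOp V)) (op : QOp V) :
    qRun (H ++ [op]) = qStep op (qRun H) :=
  List.foldl_append ..

theorem qPerturbing_deq_deq_iff {V : Type} (H : List (QOp V)) :
    qPerturbing QOp.deq QOp.deq H ↔ (qRun H).tail.head? ≠ (qRun H).head? := by
  simp only [qPerturbing, qRun_append_singleton, qStep, qResp, ne_eq, Option.some.injEq]

theorem qPerturbing_deq_deq_of_qRun_eq_cons_cons {V : Type} {H : List (QOp V)} {a b : V}
    {s : List V} (hH : qRun H = a :: b :: s) (hab : a ≠ b) :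
    qPerturbing QOp.deq QOp.deq H := by
  rw [qPerturbing_deq_deq_iff, hH]
  simpa using hab.symm

/-- A FIFO queue with two distinct values, initially empty, is
doubly-perturbing, witnessed by dequeue: after `Enq_p(v₀) ∘ Enq_p(v₁)`,
`Deq_p` is perturbing w.r.t. `Deq_q`; and after further extending by
`Deq_p ∘ Deq_q ∘ Enq_q(v₀) ∘ Enq_q(v₁)`, `Deq_p` is again perturbing
w.r.t. `Deq_q`. -/
theorem stmt6 {V : Type} (v0 v1 : V) (h : v0 ≠ v1) :
    qPerturbing QOp.deq QOp.deq [QOp.enq v0, QOp.enq v1] ∧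
    qPerturbing QOp.deq QOp.deq
      [QOp.enq v0, QOp.enq v1, QOp.deq, QOp.deq, QOp.enq v0, QOp.enq v1] :=
  -- The two dequeues empty the queue, so both histories leave it in the state `[v0, v1]`.
  ⟨qPerturbing_deq_deq_of_qRun_eq_cons_cons (s := []) rfl h,
    qPerturbing_deq_deq_of_qRun_eq_cons_cons (s := []) rfl h⟩
end

section
/- A max register object is not doubly-perturbing: no operation of the max register (neither read nor writeMax(v) for any v) witnesses that it is doubly-perturbing. -/
/-!
An operation can only be perturbing if it changes the state. A read never does, and the state
never decreases, so once `writeMax v` has been applied the state stays `≥ v` and every later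
`writeMax v` is a no-op.
-/

/-- Operations of a max register: `writeMax v` and `read`. -/
inductive MROp : Type
  | writeMax (v : ℕ)
  | read

def mrStep : MROp → ℕ → ℕ
  | .writeMax v, s => max s v
  | .read, s => s

def mrResp : MROp → ℕ → Option ℕ
  | .writeMax _, _ => none
  | .read, s => some s

/-- State of the max register after a sequential history (initially 0). -/
def mrRun (H : List MROp) : ℕ :=
  H.foldl (fun s op => mrStep op s) 0

/-- `opp` is perturbing with respect to `opq` after history `H`. -/
def mrPerturbing (opp opq : MROp) (H : List MROp) : Prop :=
  mrResp opq (mrRun (H ++ [opp])) ≠ mrResp opq (mrRun H)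

theorem le_mrStep (op : MROp) (s : ℕ) : s ≤ mrStep op s := by
  cases op
  · exact le_max_left _ _
  · exact le_rfl

theorem mrStep_writeMax_of_le {v s : ℕ} (h : v ≤ s) : mrStep (.writeMax v) s = s :=
  max_eq_left h

theorem mrRun_append_singleton (H : List MROp) (op : MROp) :
    mrRun (H ++ [op]) = mrStep op (mrRun H) := by
  simp [mrRun]

theorem mrRun_le_mrRun_append (H L : List MROp) : mrRun H ≤ mrRun (H ++ L) := by
  induction L generalizing H with
  | nil => simp
  | cons op L ih =>
    calc mrRun H ≤ mrRun (H ++ [op]) := by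
          rw [mrRun_append_singleton]; exact le_mrStep op _
      _ ≤ mrRun (H ++ [op] ++ L) := ih _
      _ = mrRun (H ++ op :: L) := by simp

theorem le_mrRun_append_writeMax (H L : List MROp) (v : ℕ) :
    v ≤ mrRun (H ++ [.writeMax v] ++ L) :=
  calc v ≤ mrRun (H ++ [.writeMax v]) := by
        rw [mrRun_append_singleton]; exact le_max_right _ _
    _ ≤ mrRun (H ++ [.writeMax v] ++ L) := mrRun_le_mrRun_append _ _

theorem not_mrPerturbing_of_mrStep_eq {op : MROp} {H : List MROp}
    (h : mrStep op (mrRun H) = mrRun H) (opq : MROp) : ¬ mrPerturbing op opq H := by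
  rw [mrPerturbing, mrRun_append_singleton, h]
  exact not_not_intro rfl

theorem not_mrPerturbing_read (opq : MROp) (H : List MROp) :
    ¬ mrPerturbing .read opq H :=
  not_mrPerturbing_of_mrStep_eq rfl opq

/-- A max register is not doubly-perturbing: no operation `op` admits a
history `H₁` and operation `opq` such that `op` is perturbing w.r.t. `opq`
after `H₁`, and `op` is again perturbing (w.r.t. some operation) after some
extension of `H₁ ∘ op ∘ opq`. -/
theorem stmt7 :
    ¬ ∃ (op : MROp) (H₁ : List MROp) (opq : MROp),
        mrPerturbing op opq H₁ ∧
        ∃ (E : List MROp) (opq' : MROp),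
          mrPerturbing op opq' (H₁ ++ [op, opq] ++ E) := by
  rintro ⟨op, H₁, opq, h_first, E, opq', h_second⟩
  cases op with
  | read => exact not_mrPerturbing_read opq H₁ h_first
  | writeMax v =>
    have hv : v ≤ mrRun (H₁ ++ [.writeMax v, opq] ++ E) := by
      simpa using le_mrRun_append_writeMax H₁ (opq :: E) v
    exact not_mrPerturbing_of_mrStep_eq (mrStep_writeMax_of_le hv) opq' h_second
end
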